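/- arXiv:1404.7559 — 5 statements merged into one kernel-verified Lean document; each statement's English description precedes it below -/
import Mathlib

section
/- If S is a dominating set of a connected graph G and C, C' are two distinct connected components of G[S], then there exist at most two vertices outside S whose addition to S merges C with some other component of G[S]: either a single vertex v adjacent to both C and another component, or two adjacent vertices v, w with v adjacent to C and w adjacent to another component. -/
/-!
Let `N` be the set of vertices that lie in `C` or lie outside `S` and have a neighbour in `C`.
A walk in `G` from `C` to `C'` starts in `N` and ends outside it, so it crosses an edge `ab`
with `a ∈ N`, `b ∉ N`. Then `a ∉ S` (a neighbour of a vertex of `C` is in `N`), and either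
`b ∈ S` lies in another component, so `a` alone merges, or `b ∉ S`, and the vertex of `S`
dominating `b` lies in another component, so the pair `a, b` merges.
-/

namespace SimpleGraph

variable {V : Type*} (G : SimpleGraph V) (S : Set V)

def AdjComponent (v : V) (C : (G.induce S).ConnectedComponent) : Prop :=
  ∃ x : S, G.Adj v x ∧ (G.induce S).connectedComponentMk x = C

def componentNbhd (C : (G.induce S).ConnectedComponent) : Set V :=
  {v | (∃ h : v ∈ S, (G.induce S).connectedComponentMk ⟨v, h⟩ = C) ∨
    (v ∉ S ∧ G.AdjComponent S v C)}

variable {G S}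

theorem exists_merge_of_adj_of_mem_componentNbhd (hdom : ∀ v, v ∉ S → ∃ u ∈ S, G.Adj v u)
    {C : (G.induce S).ConnectedComponent} {a b : V} (hab : G.Adj a b)
    (ha : a ∈ G.componentNbhd S C) (hb : b ∉ G.componentNbhd S C) :
    (∃ v, v ∉ S ∧ G.AdjComponent S v C ∧ ∃ D, D ≠ C ∧ G.AdjComponent S v D) ∨
    (∃ v w, v ∉ S ∧ w ∉ S ∧ G.Adj v w ∧ G.AdjComponent S v C ∧
      ∃ D, D ≠ C ∧ G.AdjComponent S w D) := by
  simp only [componentNbhd, Set.mem_ofPred_eq, not_or, not_exists, not_and] at ha hb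
  obtain ⟨hbC, hbAdj⟩ := hb
  rcases ha with ⟨haS, haC⟩ | ⟨haS, haAdj⟩
  · by_cases hbS : b ∈ S
    · exact absurd ((ConnectedComponent.connectedComponentMk_eq_of_adj
        (show (G.induce S).Adj ⟨b, hbS⟩ ⟨a, haS⟩ from hab.symm)).trans haC) (hbC hbS)
    · exact absurd ⟨⟨a, haS⟩, hab.symm, haC⟩ (hbAdj hbS)
  · by_cases hbS : b ∈ S
    · exact Or.inl ⟨a, haS, haAdj, _, hbC hbS, ⟨b, hbS⟩, hab, rfl⟩
    · obtain ⟨u, huS, hbu⟩ := hdom b hbS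
      have huC : (G.induce S).connectedComponentMk ⟨u, huS⟩ ≠ C :=
        fun huC ↦ hbAdj hbS ⟨⟨u, huS⟩, hbu, huC⟩
      exact Or.inr ⟨a, b, haS, hbS, hab, haAdj, _, huC, ⟨u, huS⟩, hbu, rfl⟩

end SimpleGraph

open SimpleGraph in
theorem stmt_1_general {V : Type*} (G : SimpleGraph V) (S : Set V)
    (hGconn : G.Connected)
    (hdom : ∀ v, v ∉ S → ∃ u ∈ S, G.Adj v u)
    (C C' : (G.induce S).ConnectedComponent) (hCC : C ≠ C') :
    (∃ v, v ∉ S ∧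
      (∃ x : S, G.Adj v ↑x ∧ (G.induce S).connectedComponentMk x = C) ∧
      (∃ D, D ≠ C ∧ ∃ y : S, G.Adj v ↑y ∧ (G.induce S).connectedComponentMk y = D)) ∨
    (∃ v w, v ∉ S ∧ w ∉ S ∧ G.Adj v w ∧
      (∃ x : S, G.Adj v ↑x ∧ (G.induce S).connectedComponentMk x = C) ∧
      (∃ D, D ≠ C ∧ ∃ y : S, G.Adj w ↑y ∧ (G.induce S).connectedComponentMk y = D)) := by
  obtain ⟨⟨c, hc⟩, rfl⟩ := C.exists_rep
  obtain ⟨⟨c', hc'⟩, rfl⟩ := C'.exists_rep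
  obtain ⟨p⟩ := hGconn.preconnected c c'
  obtain ⟨d, -, hd, hd'⟩ := p.exists_boundary_dart (G.componentNbhd S _)
    (Or.inl ⟨hc, rfl⟩) fun h ↦ h.elim (fun ⟨_, h⟩ ↦ hCC h.symm) (fun ⟨h, _⟩ ↦ h hc')
  exact exists_merge_of_adj_of_mem_componentNbhd hdom d.adj hd hd'

/-- If `S` is a dominating set of a connected graph `G` and `C, C'` are two distinct
connected components of `G[S]`, then either a single vertex `v ∉ S` adjacent to `C` and to
another component, or two adjacent vertices `v, w ∉ S` with `v` adjacent to `C` and `w`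
adjacent to another component, merges `C` with some other component of `G[S]`. -/
theorem stmt_1 {V : Type*} [Fintype V] (G : SimpleGraph V) (S : Set V)
    (hGconn : G.Connected)
    (hdom : ∀ v, v ∉ S → ∃ u ∈ S, G.Adj v u)
    (C C' : (G.induce S).ConnectedComponent) (hCC : C ≠ C') :
    (∃ v, v ∉ S ∧
      (∃ x : S, G.Adj v ↑x ∧ (G.induce S).connectedComponentMk x = C) ∧
      (∃ D, D ≠ C ∧ ∃ y : S, G.Adj v ↑y ∧ (G.induce S).connectedComponentMk y = D)) ∨
    (∃ v w, v ∉ S ∧ w ∉ S ∧ G.Adj v w ∧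
      (∃ x : S, G.Adj v ↑x ∧ (G.induce S).connectedComponentMk x = C) ∧
      (∃ D, D ≠ C ∧ ∃ y : S, G.Adj w ↑y ∧ (G.induce S).connectedComponentMk y = D)) :=
  stmt_1_general G S hGconn hdom C C' hCC
end

section
/- Let T be a finite set of weighted elements and X₁,…,X_ℓ subsets of T such that each element of T belongs to at most 2 of the X_i. Suppose there are at least N/2 'components' each of which is covered (satisfied) by at least one X_i, and each X_i distributes half its total weight equally among the components it satisfies. If every X_i has efficiency |Φ(X_i)|/Cost(X_i) < N/(4·W), where W = Σ_{v∈T} c(v), then summing the distributed costs over all satisfied components exceeds W, a contradiction; hence some X_i has efficiency at least N/(4W). -/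
/-!
If every star had efficiency below `N / (4W)`, then its cost would exceed `4W / N` times the
number of components it satisfies. Summing over all stars, the costs add up to at most `2W`
because every element lies in at most two stars, while the satisfied components number at
least `N / 2`; so `2W > (4W / N) · (N / 2) = 2W`, which is absurd.
-/

open Finset

theorem sum_sum_le_mul_sum_of_forall_card_le {ι V R : Type*} [Fintype ι] [DecidableEq V]
    [CommSemiring R] [PartialOrder R] [IsOrderedRing R] {T : Finset V} {c : V → R}
    {X : ι → Finset V} {k : ℕ} (hc : ∀ v ∈ T, 0 ≤ c v) (hsub : ∀ i, X i ⊆ T)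
    (hmult : ∀ v ∈ T, #{i | v ∈ X i} ≤ k) :
    ∑ i, ∑ v ∈ X i, c v ≤ k * ∑ v ∈ T, c v := by
  have hswap : ∑ i, ∑ v ∈ X i, c v = ∑ v ∈ T, ∑ _i ∈ {i | v ∈ X i}, c v :=
    sum_comm' fun i v => by
      simp only [mem_univ, true_and, mem_filter]
      exact iff_self_and.2 fun hv => hsub i hv
  rw [hswap, mul_sum]
  refine sum_le_sum fun v hv => ?_
  rw [sum_const, nsmul_eq_mul]
  exact mul_le_mul_of_nonneg_right (Nat.mono_cast (hmult v hv)) (hc v hv)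

theorem exists_le_div_of_mul_sum_le {ι K : Type*} [Field K] [LinearOrder K]
    [IsStrictOrderedRing K] {s : Finset ι} {a b : ι → K} {r : K} (hs : s.Nonempty)
    (hb : ∀ i ∈ s, 0 < b i) (h : r * ∑ i ∈ s, b i ≤ ∑ i ∈ s, a i) :
    ∃ i ∈ s, r ≤ a i / b i := by
  rw [mul_sum] at h
  obtain ⟨i, hi, hle⟩ := exists_le_of_sum_le hs h
  exact ⟨i, hi, (le_div_iff₀ (hb i hi)).2 hle⟩

theorem stmt_3_general {V Comp : Type*} [DecidableEq V] (T : Finset V) (c : V → ℝ)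
    (hc : ∀ v ∈ T, 0 < c v) (ℓ : ℕ) (X : Fin ℓ → Finset V) (Φ : Fin ℓ → Finset Comp)
    (hsub : ∀ i, X i ⊆ T) (hne : ∀ i, (X i).Nonempty)
    (hmult : ∀ v ∈ T, (Finset.univ.filter fun i => v ∈ X i).card ≤ 2)
    (N : ℕ) (hN : 0 < N) (U : Finset Comp) (hU : N ≤ 2 * U.card)
    (hcover : ∀ Cc ∈ U, ∃ i, Cc ∈ Φ i) :
    ∃ i, (N : ℝ) / (4 * ∑ v ∈ T, c v) ≤ (Φ i).card / ∑ v ∈ X i, c v := by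
  classical
  set W := ∑ v ∈ T, c v
  obtain ⟨C, hC⟩ : U.Nonempty := card_pos.mp (by omega)
  obtain ⟨i₀, -⟩ := hcover C hC
  have hcost_pos : ∀ i, 0 < ∑ v ∈ X i, c v := fun i =>
    sum_pos (fun v hv => hc v (hsub i hv)) (hne i)
  have hW : 0 < W := sum_pos hc ((hne i₀).mono (hsub i₀))
  have hcost : ∑ i, ∑ v ∈ X i, c v ≤ 2 * W :=
    mod_cast sum_sum_le_mul_sum_of_forall_card_le (fun v hv => (hc v hv).le) hsub hmult
  have hcard : (U.card : ℝ) ≤ ∑ i, ((Φ i).card : ℝ) := by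
    have hU_sub : U ⊆ univ.biUnion Φ := fun C hC => by simpa using hcover C hC
    exact_mod_cast (card_le_card hU_sub).trans card_biUnion_le
  obtain ⟨i, -, hi⟩ := exists_le_div_of_mul_sum_le ⟨i₀, mem_univ _⟩
    (fun i _ => hcost_pos i) <| calc
      (N : ℝ) / (4 * W) * ∑ i, ∑ v ∈ X i, c v ≤ N / (4 * W) * (2 * W) := by gcongr
      _ = N / 2 := by field_simp; ring
      _ ≤ U.card := by rw [div_le_iff₀ two_pos]; exact_mod_cast (by omega : N ≤ U.card * 2)
      _ ≤ ∑ i, ((Φ i).card : ℝ) := hcard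
  exact ⟨i, hi⟩

/-- Weighted covering lemma: if each element of `T` lies in at most 2 of the stars `X i`,
each of at least `N/2` components is satisfied by some star, and `W = Σ_{v∈T} c v`, then
some star has efficiency `|Φ(X i)| / Cost(X i) ≥ N / (4W)`. -/
theorem stmt_3 {V Comp : Type*} [DecidableEq V] (T : Finset V) (c : V → ℝ)
    (hc : ∀ v ∈ T, 0 < c v) (ℓ : ℕ) (X : Fin ℓ → Finset V) (Φ : Fin ℓ → Finset Comp)
    (hsub : ∀ i, X i ⊆ T) (hne : ∀ i, (X i).Nonempty) (hΦ : ∀ i, (Φ i).Nonempty)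
    (hmult : ∀ v ∈ T, (Finset.univ.filter fun i => v ∈ X i).card ≤ 2)
    (N : ℕ) (hN : 0 < N) (U : Finset Comp) (hU : N ≤ 2 * U.card)
    (hcover : ∀ Cc ∈ U, ∃ i, Cc ∈ Φ i) :
    ∃ i, (N : ℝ) / (4 * ∑ v ∈ T, c v) ≤ (Φ i).card / ∑ v ∈ X i, c v :=
  stmt_3_general T c hc ℓ X Φ hsub hne hmult N hN U hU hcover
end

section
/- In the sequential star-covering procedure over the white vertices T of an optimal CDS, every unsatisfied component C gets satisfied by at least one star in the produced collection. -/
open Finset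

/-!
Take the vertex `v ∈ T` adjacent to `C` that connectivity of the optimal CDS provides. If `v`
is adjacent to a second component, the star centred at `v` satisfies `C` whenever `v` is
processed. Otherwise `v` is lonely and has a neighbour `w ∈ T` adjacent to a second component;
as long as `v` is un-hit, the star centred at `w` contains `v` and satisfies `C`. Either way,
`v` ends up in a chosen star: if `v` was hit earlier, it already lies in a chosen star. And a
chosen star containing a vertex adjacent to `C` satisfies `C`, since it touches two distinct
components, at least one of which differs from `C`.
-/

/-- A star `X` satisfies component `C` if `C` is unsatisfied, some node of `X` is adjacent to
`C`, and some node of `X` is adjacent to a different component. -/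
abbrev SatC {V Comp : Type*} (adjC : V → Comp → Prop) (unsat : Comp → Prop)
    (X : Finset V) (C : Comp) : Prop :=
  unsat C ∧ (∃ x ∈ X, adjC x C) ∧ ∃ C', C' ≠ C ∧ ∃ y ∈ X, adjC y C'

/-- One step of the sequential star-covering procedure. -/
def coverStep {V : Type*} [DecidableEq V] [Fintype V] (G : SimpleGraph V)
    [DecidableRel G.Adj] (lonely : V → Prop) [DecidablePred lonely]
    (Sat : Finset V → Prop) [DecidablePred Sat]
    (acc : List (V × Finset V) × Finset V) (v : V) : List (V × Finset V) × Finset V :=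
  let Xv : Finset V := insert v ((G.neighborFinset v).filter fun w => lonely w ∧ w ∉ acc.2)
  if Sat Xv then ((v, Xv) :: acc.1, acc.2 ∪ Xv.erase v) else acc

lemma SatC.of_mem {V Comp : Type*} {adjC : V → Comp → Prop} {unsat : Comp → Prop}
    {X : Finset V} {C D : Comp} {v : V} (hD : SatC adjC unsat X D) (hv : v ∈ X)
    (hvC : adjC v C) (hC : unsat C) : SatC adjC unsat X C := by
  obtain ⟨-, ⟨x, hx, hxD⟩, D', hD'D, y, hy, hyD'⟩ := hD
  refine ⟨hC, ⟨v, hv, hvC⟩, ?_⟩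
  by_cases hDC : D = C
  · exact ⟨D', hDC ▸ hD'D, y, hy, hyD'⟩
  · exact ⟨D, hDC, x, hx, hxD⟩

namespace CoverStep

variable {V : Type*} [DecidableEq V] [Fintype V] (G : SimpleGraph V) [DecidableRel G.Adj]
  (lonely : V → Prop) [DecidablePred lonely] {Sat : Finset V → Prop} [DecidablePred Sat]

/-- The star `X_u` of the procedure, when the vertices in `S` have already been hit. -/
def star (S : Finset V) (u : V) : Finset V :=
  insert u ((G.neighborFinset u).filter fun w => lonely w ∧ w ∉ S)

variable {G lonely}

lemma mem_star_of_lonely {S : Finset V} {u v : V} (hv : lonely v) (huv : G.Adj u v)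
    (hvS : v ∉ S) : v ∈ star G lonely S u :=
  mem_insert_of_mem (mem_filter.mpr ⟨(G.mem_neighborFinset u v).mpr huv, hv, hvS⟩)

lemma coverStep_eq (acc : List (V × Finset V) × Finset V) (u : V) :
    coverStep G lonely Sat acc u =
      if Sat (star G lonely acc.2 u) then
        ((u, star G lonely acc.2 u) :: acc.1, acc.2 ∪ (star G lonely acc.2 u).erase u)
      else acc :=
  rfl

lemma fst_subset_coverStep (acc : List (V × Finset V) × Finset V) (u : V) :
    acc.1 ⊆ (coverStep G lonely Sat acc u).1 := by
  rw [coverStep_eq]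
  split
  · exact List.subset_cons_self _ _
  · exact List.Subset.refl _

lemma fst_subset_foldl (l : List V) (acc : List (V × Finset V) × Finset V) :
    acc.1 ⊆ (l.foldl (coverStep G lonely Sat) acc).1 := by
  induction l generalizing acc with
  | nil => exact List.Subset.refl _
  | cons u l ih => exact List.Subset.trans (fst_subset_coverStep acc u) (ih _)

variable (Sat) in
/-- In a state `acc` of the procedure, `acc.1` lists the chosen stars with their centres and
`acc.2` is the set of hit vertices. -/
def HitCovered (acc : List (V × Finset V) × Finset V) : Prop :=
  ∀ x ∈ acc.2, ∃ p ∈ acc.1, x ∈ p.2 ∧ Sat p.2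

lemma HitCovered.coverStep {acc : List (V × Finset V) × Finset V} (h : HitCovered Sat acc)
    (u : V) : HitCovered Sat (coverStep G lonely Sat acc u) := by
  rw [coverStep_eq]
  split
  · next hSat =>
    intro x hx
    rcases mem_union.mp hx with hx | hx
    · obtain ⟨p, hp, hxp, hSp⟩ := h x hx
      exact ⟨p, List.mem_cons_of_mem _ hp, hxp, hSp⟩
    · exact ⟨_, List.mem_cons_self, mem_of_mem_erase hx, hSat⟩
  · exact h

lemma exists_chosen_star_mem {u v : V}
    (hstar : ∀ S, v ∉ S → v ∈ star G lonely S u ∧ Sat (star G lonely S u)) :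
    ∀ (l : List V) (acc : List (V × Finset V) × Finset V), u ∈ l → HitCovered Sat acc →
      ∃ p ∈ (l.foldl (coverStep G lonely Sat) acc).1, v ∈ p.2 ∧ Sat p.2
  | a :: l, acc, hu, hacc => by
    rw [List.foldl_cons]
    rcases List.mem_cons.mp hu with rfl | hu
    · suffices ∃ p ∈ (coverStep G lonely Sat acc u).1, v ∈ p.2 ∧ Sat p.2 by
        obtain ⟨p, hp, hvp⟩ := this
        exact ⟨p, fst_subset_foldl l _ hp, hvp⟩
      by_cases hv : v ∈ acc.2
      · obtain ⟨p, hp, hvp⟩ := hacc v hv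
        exact ⟨p, fst_subset_coverStep acc u hp, hvp⟩
      · obtain ⟨hvX, hSat⟩ := hstar acc.2 hv
        rw [coverStep_eq, if_pos hSat]
        exact ⟨_, List.mem_cons_self, hvX, hSat⟩
    · exact exists_chosen_star_mem hstar l _ hu (hacc.coverStep a)

end CoverStep

theorem stmt_11_general {V Comp : Type*} [DecidableEq V] [Fintype V] [DecidableEq Comp] [Fintype Comp]
    (G : SimpleGraph V) [DecidableRel G.Adj]
    (adjC : V → Comp → Prop) [∀ v C, Decidable (adjC v C)]
    (unsat : Comp → Prop) [DecidablePred unsat]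
    (lonely : V → Prop) [DecidablePred lonely]
    (hlonely : ∀ v, lonely v ↔
      ((∃ C, adjC v C ∧ unsat C) ∧ ∀ C C', adjC v C → adjC v C' → C = C'))
    (T : Finset V) (order : List V)
    (hTorder : ∀ v, v ∈ order ↔ v ∈ T)
    (hOPT : ∀ C, unsat C → ∃ v ∈ T, adjC v C ∧
      ((∃ C', C' ≠ C ∧ adjC v C') ∨
        ∃ w ∈ T, G.Adj v w ∧ ∃ C', C' ≠ C ∧ adjC w C')) :
    ∀ C, unsat C →
      ∃ p ∈ (order.foldl
          (coverStep G lonely (fun X => ∃ C, SatC adjC unsat X C)) ([], ∅)).1,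
        SatC adjC unsat p.2 C := by
  intro C hC
  obtain ⟨v, hvT, hvC, hcase⟩ := hOPT C hC
  have hcentre : ∃ u ∈ order, ∀ S, v ∉ S → v ∈ CoverStep.star G lonely S u ∧
      ∃ D, SatC adjC unsat (CoverStep.star G lonely S u) D := by
    by_cases hA : ∃ C', C' ≠ C ∧ adjC v C'
    · obtain ⟨C', hC'C, hvC'⟩ := hA
      refine ⟨v, (hTorder v).2 hvT, fun S _ => ?_⟩
      have hv : v ∈ CoverStep.star G lonely S v := mem_insert_self _ _
      exact ⟨hv, C, hC, ⟨v, hv, hvC⟩, C', hC'C, v, hv, hvC'⟩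
    · have honly : ∀ C₁, adjC v C₁ → C₁ = C := fun C₁ h =>
        by_contra fun hne => hA ⟨C₁, hne, h⟩
      have hvlonely : lonely v := (hlonely v).2
        ⟨⟨C, hvC, hC⟩, fun C₁ C₂ h₁ h₂ => (honly C₁ h₁).trans (honly C₂ h₂).symm⟩
      obtain ⟨w, hwT, hvw, C', hC'C, hwC'⟩ := hcase.resolve_left hA
      refine ⟨w, (hTorder w).2 hwT, fun S hvS => ?_⟩
      have hv := CoverStep.mem_star_of_lonely hvlonely hvw.symm hvS
      exact ⟨hv, C, hC, ⟨v, hv, hvC⟩, C', hC'C, w, mem_insert_self _ _, hwC'⟩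
  obtain ⟨u, hu, hstar⟩ := hcentre
  obtain ⟨p, hp, hvp, D, hD⟩ :=
    CoverStep.exists_chosen_star_mem (Sat := fun X => ∃ D, SatC adjC unsat X D) hstar
      order ([], ∅) hu (by simp [CoverStep.HitCovered])
  exact ⟨p, hp, hD.of_mem hvp hvC hC⟩

/-- In the sequential star-covering procedure over the white vertices `T` of an optimal CDS,
every unsatisfied component `C` gets satisfied by at least one star in the produced
collection. -/
theorem stmt_11 {V Comp : Type*} [DecidableEq V] [Fintype V] [DecidableEq Comp] [Fintype Comp]
    (G : SimpleGraph V) [DecidableRel G.Adj]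
    (adjC : V → Comp → Prop) [∀ v C, Decidable (adjC v C)]
    (unsat : Comp → Prop) [DecidablePred unsat]
    (lonely : V → Prop) [DecidablePred lonely]
    (hlonely : ∀ v, lonely v ↔
      ((∃ C, adjC v C ∧ unsat C) ∧ ∀ C C', adjC v C → adjC v C' → C = C'))
    (T : Finset V) (order : List V) (horder : order.Nodup)
    (hTorder : ∀ v, v ∈ order ↔ v ∈ T)
    (hOPT : ∀ C, unsat C → ∃ v ∈ T, adjC v C ∧
      ((∃ C', C' ≠ C ∧ adjC v C') ∨
        ∃ w ∈ T, G.Adj v w ∧ ∃ C', C' ≠ C ∧ adjC w C')) :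
    ∀ C, unsat C →
      ∃ p ∈ (order.foldl
          (coverStep G lonely (fun X => ∃ C, SatC adjC unsat X C)) ([], ∅)).1,
        SatC adjC unsat p.2 C :=
  stmt_11_general G adjC unsat lonely hlonely T order hTorder hOPT
end

section
/- In a cycle of 2k weighted nodes where k nodes have weight 1 and k have weight W (alternating), plus a center node of weight n connected to all weight-1 nodes, the minimum-weight dominating set consisting of the weight-1 nodes, when connected greedily by adding for each component the lightest connecting path of at most 2 intermediate nodes, incurs total weight Θ(k·W), whereas adding the single center node yields a CDS of total weight at most 2k + n. -/
/-- Vertices: a cycle on `2k` nodes plus a center node. -/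
def CycVertex (k : ℕ) := Fin (2 * k) ⊕ Unit

instance (k : ℕ) : Fintype (CycVertex k) := by unfold CycVertex; infer_instance
instance (k : ℕ) : DecidableEq (CycVertex k) := by unfold CycVertex; infer_instance

/-- Cycle edges `v_i v_{i+1}` (mod `2k`), and the center adjacent to all even-indexed
(weight-1) nodes. -/
def cycRel (k : ℕ) : CycVertex k → CycVertex k → Prop
  | Sum.inl i, Sum.inl j => ((i : ℕ) + 1) % (2 * k) = (j : ℕ)
  | Sum.inr _, Sum.inl i => (i : ℕ) % 2 = 0
  | _, _ => False

def cycGraph (k : ℕ) : SimpleGraph (CycVertex k) := SimpleGraph.fromRel (cycRel k)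

/-- Alternating weights `1` and `W` on the cycle; weight `n = 2k+1` on the center. -/
noncomputable def cycWeight (k : ℕ) (W : ℝ) : CycVertex k → ℝ
  | Sum.inl i => if (i : ℕ) % 2 = 0 then 1 else W
  | Sum.inr _ => (2 * k + 1 : ℝ)
/-!
The center is adjacent to every weight-`1` node, so together with those nodes it forms a star,
which is connected and dominating. Without the center, the only edges are cycle edges, so
deleting two weight-`W` nodes `v_a`, `v_b` (`a < b`) separates the arc strictly between them from
the rest of the cycle; both parts contain weight-`1` nodes. Hence a connected set containing every
weight-`1` node but not the center omits at most one of the `k` weight-`W` nodes.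
-/

theorem SimpleGraph.Reachable.iff_of_forall_adj {V : Type*} {G : SimpleGraph V} {P : V → Prop}
    (hP : ∀ u v, G.Adj u v → (P u ↔ P v)) {u v : V} (h : G.Reachable u v) : P u ↔ P v := by
  obtain ⟨w⟩ := h
  induction w with
  | nil => rfl
  | cons hadj _ ih => exact (hP _ _ hadj).trans ih

theorem SimpleGraph.induce_connected_of_forall_adj {V : Type*} {G : SimpleGraph V} {s : Set V}
    {c : V} (hc : c ∈ s) (h : ∀ v ∈ s, v ≠ c → G.Adj c v) : (G.induce s).Connected := by
  refine (SimpleGraph.connected_iff_exists_forall_reachable _).2 ⟨⟨c, hc⟩, ?_⟩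
  rintro ⟨v, hv⟩
  by_cases hvc : v = c
  · subst hvc; rfl
  · exact SimpleGraph.Adj.reachable (SimpleGraph.induce_adj.2 (h v hv hvc))

theorem Nat.lt_and_lt_iff_of_succ_mod_eq {n a b i j : ℕ} (hin : i < n) (hbn : b < n)
    (hij : (i + 1) % n = j) (hia : i ≠ a) (hjb : j ≠ b) : (a < i ∧ i < b ↔ a < j ∧ j < b) := by
  rcases Nat.lt_or_ge (i + 1) n with h | h
  · rw [Nat.mod_eq_of_lt h] at hij
    omega
  · rw [show i + 1 = n by omega, Nat.mod_self] at hij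
    omega

section CycGraph

variable {k : ℕ}

theorem cycGraph_adj_inl_inl {i j : Fin (2 * k)} :
    (cycGraph k).Adj (.inl i) (.inl j) ↔
      i ≠ j ∧ (((i : ℕ) + 1) % (2 * k) = j ∨ ((j : ℕ) + 1) % (2 * k) = i) :=
  (SimpleGraph.fromRel_adj (cycRel k) (.inl i) (.inl j)).trans <| by
    simp [cycRel, CycVertex]

theorem cycGraph_adj_inr_inl {i : Fin (2 * k)} :
    (cycGraph k).Adj (.inr ()) (.inl i) ↔ (i : ℕ) % 2 = 0 :=
  (SimpleGraph.fromRel_adj (cycRel k) (.inr ()) (.inl i)).trans <| by simp [cycRel, CycVertex]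

def cycSucc (i : Fin (2 * k)) : Fin (2 * k) := ⟨((i : ℕ) + 1) % (2 * k), Nat.mod_lt _ i.pos⟩

theorem cycSucc_val_mod_two (i : Fin (2 * k)) : (cycSucc i : ℕ) % 2 = ((i : ℕ) + 1) % 2 :=
  Nat.mod_mod_of_dvd _ (dvd_mul_right 2 k)

theorem cycGraph_adj_cycSucc (i : Fin (2 * k)) : (cycGraph k).Adj (.inl i) (.inl (cycSucc i)) := by
  refine cycGraph_adj_inl_inl.2 ⟨fun h => ?_, .inl rfl⟩
  have := cycSucc_val_mod_two i
  rw [← h] at this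
  omega

theorem cycWeight_nonneg {W : ℝ} (hW : 0 ≤ W) (v : CycVertex k) : 0 ≤ cycWeight k W v := by
  rcases v with i | _
  · simp only [cycWeight]; split_ifs <;> linarith
  · simp only [cycWeight]; positivity

end CycGraph

section HubSet

variable {k : ℕ}

open scoped Classical in
noncomputable def hubSet (k : ℕ) : Finset (CycVertex k) :=
  Finset.univ.filter fun v : CycVertex k =>
    (∃ i : Fin (2 * k), v = Sum.inl i ∧ (i : ℕ) % 2 = 0) ∨ v = Sum.inr ()

theorem mem_hubSet {v : CycVertex k} :
    v ∈ hubSet k ↔ (∃ i : Fin (2 * k), v = .inl i ∧ (i : ℕ) % 2 = 0) ∨ v = .inr () := by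
  classical
  exact Finset.mem_filter.trans (and_iff_right (Finset.mem_univ _))

theorem inl_mem_hubSet {i : Fin (2 * k)} : .inl i ∈ hubSet k ↔ (i : ℕ) % 2 = 0 := by
  refine mem_hubSet.trans ⟨?_, fun hi => .inl ⟨i, rfl, hi⟩⟩
  rintro (⟨j, hij, hj⟩ | h)
  · rwa [Sum.inl_injective hij]
  · exact absurd h Sum.inl_ne_inr

theorem inr_mem_hubSet : .inr () ∈ hubSet k :=
  mem_hubSet.2 (.inr rfl)

theorem hubSet_dominating (v : CycVertex k) (hv : v ∉ hubSet k) :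
    ∃ u ∈ hubSet k, (cycGraph k).Adj v u := by
  rcases v with i | ⟨⟩
  · refine ⟨.inl (cycSucc i), inl_mem_hubSet.2 ?_, cycGraph_adj_cycSucc i⟩
    have := cycSucc_val_mod_two i
    have := mt inl_mem_hubSet.2 hv
    omega
  · exact absurd inr_mem_hubSet hv

theorem hubSet_connected : ((cycGraph k).induce (hubSet k : Set (CycVertex k))).Connected := by
  refine SimpleGraph.induce_connected_of_forall_adj (Finset.mem_coe.2 inr_mem_hubSet) ?_
  rintro (i | ⟨⟩) hv hne
  · exact cycGraph_adj_inr_inl.2 (inl_mem_hubSet.1 hv)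
  · exact absurd rfl hne

theorem sum_hubSet_cycWeight_le (W : ℝ) :
    ∑ v ∈ hubSet k, cycWeight k W v ≤ 2 * k + (2 * k + 1) := by
  rw [← Finset.add_sum_erase _ _ inr_mem_hubSet]
  have hweight : ∀ v ∈ (hubSet k).erase (.inr ()), cycWeight k W v = 1 := by
    rintro (i | ⟨⟩) hv
    · simp [cycWeight, inl_mem_hubSet.1 (Finset.mem_of_mem_erase hv)]
    · exact absurd rfl (Finset.ne_of_mem_erase hv)
  have hcard : ((hubSet k).erase (.inr ())).card ≤ 2 * k := by
    have hle := Finset.card_le_univ (hubSet k)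
    have hV : Fintype.card (CycVertex k) = 2 * k + 1 := by simp [CycVertex]
    rw [Finset.card_erase_of_mem inr_mem_hubSet]
    omega
  rw [Finset.sum_congr rfl hweight, Finset.sum_const, nsmul_one]
  have : (((hubSet k).erase (.inr ())).card : ℝ) ≤ 2 * k := by exact_mod_cast hcard
  simp only [cycWeight]
  linarith

end HubSet

section ArcSeparation

variable {k : ℕ} {D : Finset (CycVertex k)}

def cycArc (a b : Fin (2 * k)) : CycVertex k → Prop :=
  Sum.elim (fun i => (a : ℕ) < i ∧ (i : ℕ) < b) fun _ => False

theorem cycArc_iff_of_adj {a b : Fin (2 * k)} (haD : .inl a ∉ D) (hbD : .inl b ∉ D)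
    (hcD : .inr () ∉ D) {u v : CycVertex k} (hu : u ∈ D) (hv : v ∈ D)
    (huv : (cycGraph k).Adj u v) : cycArc a b u ↔ cycArc a b v := by
  rcases u with i | ⟨⟩
  swap; · exact absurd hu hcD
  rcases v with j | ⟨⟩
  swap; · exact absurd hv hcD
  have hne : ∀ {x y : Fin (2 * k)}, .inl x ∈ D → .inl y ∉ D → (x : ℕ) ≠ y :=
    fun hx hy h => hy (Fin.val_injective h ▸ hx)
  rcases (cycGraph_adj_inl_inl.1 huv).2 with h | h
  · exact Nat.lt_and_lt_iff_of_succ_mod_eq i.2 b.2 h (hne hu haD) (hne hv hbD)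
  · exact (Nat.lt_and_lt_iff_of_succ_mod_eq j.2 b.2 h (hne hv haD) (hne hu hbD)).symm

theorem inl_mem_or_inl_mem_of_connected
    (hconn : ((cycGraph k).induce (D : Set (CycVertex k))).Connected)
    (heven : ∀ i : Fin (2 * k), (i : ℕ) % 2 = 0 → .inl i ∈ D) (hcD : .inr () ∉ D)
    {a b : Fin (2 * k)} (ha : (a : ℕ) % 2 = 1) (hb : (b : ℕ) % 2 = 1) (hab : a < b) :
    .inl a ∈ D ∨ .inl b ∈ D := by
  by_contra! ⟨haD, hbD⟩
  have hxD : .inl (cycSucc a) ∈ D := heven _ (by rw [cycSucc_val_mod_two]; omega)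
  have hyD : .inl (cycSucc b) ∈ D := heven _ (by rw [cycSucc_val_mod_two]; omega)
  have hxy : cycArc a b (.inl (cycSucc a)) ↔ cycArc a b (.inl (cycSucc b)) :=
    (hconn.preconnected ⟨_, hxD⟩ ⟨_, hyD⟩).iff_of_forall_adj (P := fun w => cycArc a b w.1)
      fun u v huv => cycArc_iff_of_adj haD hbD hcD u.2 v.2 (SimpleGraph.induce_adj.1 huv)
  -- `a + 1` lies strictly between `a` and `b`; `b + 1` wraps around to `0` or lies beyond `b`
  have hxa : (cycSucc a : ℕ) = a + 1 := Nat.mod_eq_of_lt (by omega)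
  simp only [cycArc, Sum.elim_inl, hxa] at hxy
  rcases Nat.lt_or_ge ((b : ℕ) + 1) (2 * k) with h | h
  · have hyb : (cycSucc b : ℕ) = b + 1 := Nat.mod_eq_of_lt h
    omega
  · have hyb : (cycSucc b : ℕ) = 0 := by
      simp only [cycSucc, show (b : ℕ) + 1 = 2 * k by omega, Nat.mod_self]
    omega

end ArcSeparation

section WeightLowerBound

variable {k : ℕ} {D : Finset (CycVertex k)}

def oddIndices (k : ℕ) : Finset (Fin (2 * k)) := Finset.univ.filter fun i => (i : ℕ) % 2 = 1

theorem mem_oddIndices {i : Fin (2 * k)} : i ∈ oddIndices k ↔ (i : ℕ) % 2 = 1 := by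
  simp [oddIndices]

theorem le_card_oddIndices (k : ℕ) : k ≤ (oddIndices k).card := by
  have h := Finset.card_le_card_of_injOn (s := Finset.univ) (t := oddIndices k)
    (fun j : Fin k => (⟨2 * j + 1, by omega⟩ : Fin (2 * k)))
    (fun j _ => mem_oddIndices.2 (by simp)) (fun i _ j _ h => Fin.ext (by simpa using h))
  simpa using h

theorem card_filter_oddIndices_not_mem_le_one
    (hconn : ((cycGraph k).induce (D : Set (CycVertex k))).Connected)
    (heven : ∀ i : Fin (2 * k), (i : ℕ) % 2 = 0 → .inl i ∈ D) (hcD : .inr () ∉ D) :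
    ((oddIndices k).filter fun i => .inl i ∉ D).card ≤ 1 := by
  refine Finset.card_le_one.2 fun a ha b hb => ?_
  simp only [Finset.mem_filter, mem_oddIndices] at ha hb
  by_contra hne
  rcases lt_or_gt_of_ne hne with hab | hab
  · exact (inl_mem_or_inl_mem_of_connected hconn heven hcD ha.1 hb.1 hab).elim ha.2 hb.2
  · exact (inl_mem_or_inl_mem_of_connected hconn heven hcD hb.1 ha.1 hab).elim hb.2 ha.2

theorem card_mul_le_sum_cycWeight {W : ℝ} (hW : 0 ≤ W) :
    ((oddIndices k).filter fun i => .inl i ∈ D).card * W ≤ ∑ v ∈ D, cycWeight k W v := by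
  set O := (oddIndices k).filter fun i => .inl i ∈ D
  calc O.card * W = ∑ i ∈ O, cycWeight k W (.inl i) := by
        rw [Finset.sum_congr rfl fun i hi => ?_, Finset.sum_const, nsmul_eq_mul]
        simp only [O, Finset.mem_filter, mem_oddIndices] at hi
        simp [cycWeight, hi.1]
    _ = ∑ v ∈ O.image Sum.inl, cycWeight k W v :=
        (Finset.sum_image fun _ _ _ _ h => Sum.inl_injective h).symm
    _ ≤ ∑ v ∈ D, cycWeight k W v := by
        refine Finset.sum_le_sum_of_subset_of_nonneg ?_ fun v _ _ => cycWeight_nonneg hW v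
        refine Finset.image_subset_iff.2 fun i hi => ?_
        simp only [O, Finset.mem_filter] at hi
        exact hi.2

theorem sub_one_mul_le_sum_cycWeight {W : ℝ} (hW : 1 ≤ W)
    (hconn : ((cycGraph k).induce (D : Set (CycVertex k))).Connected)
    (heven : ∀ i : Fin (2 * k), (i : ℕ) % 2 = 0 → .inl i ∈ D) (hcD : .inr () ∉ D) :
    ((k : ℝ) - 1) * W ≤ ∑ v ∈ D, cycWeight k W v := by
  have hsplit := Finset.card_filter_add_card_filter_not (s := oddIndices k)
    (p := fun i => .inl i ∈ D)
  have hmissing := card_filter_oddIndices_not_mem_le_one hconn heven hcD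
  have hodd := le_card_oddIndices k
  have hcard : (k : ℝ) - 1 ≤ ((oddIndices k).filter fun i => .inl i ∈ D).card := by
    rw [sub_le_iff_le_add]
    exact_mod_cast (by omega)
  exact (mul_le_mul_of_nonneg_right hcard (by linarith)).trans
    (card_mul_le_sum_cycWeight (by linarith))

end WeightLowerBound

open scoped Classical in
theorem stmt_13_general (k : ℕ) (W : ℝ) (hW : 1 ≤ W) :
    (∀ v, v ∉ ((Finset.univ.filter fun v : CycVertex k =>
          (∃ i : Fin (2 * k), v = Sum.inl i ∧ (i : ℕ) % 2 = 0) ∨ v = Sum.inr ()) :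
        Finset (CycVertex k)) →
      ∃ u ∈ (Finset.univ.filter fun v : CycVertex k =>
          (∃ i : Fin (2 * k), v = Sum.inl i ∧ (i : ℕ) % 2 = 0) ∨ v = Sum.inr ()),
        (cycGraph k).Adj v u) ∧
    ((cycGraph k).induce ((Finset.univ.filter fun v : CycVertex k =>
        (∃ i : Fin (2 * k), v = Sum.inl i ∧ (i : ℕ) % 2 = 0) ∨ v = Sum.inr ()) :
      Finset (CycVertex k))).Connected ∧
    (∑ v ∈ (Finset.univ.filter fun v : CycVertex k =>
        (∃ i : Fin (2 * k), v = Sum.inl i ∧ (i : ℕ) % 2 = 0) ∨ v = Sum.inr ()),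
      cycWeight k W v) ≤ 2 * k + (2 * k + 1) ∧
    ((2 * k + (2 * k + 1) : ℝ) ≤ 2 * (2 * k + 1)) ∧
    (∀ D : Finset (CycVertex k),
      (∀ v, v ∉ D → ∃ u ∈ D, (cycGraph k).Adj v u) →
      ((cycGraph k).induce (D : Set (CycVertex k))).Connected →
      (∀ i : Fin (2 * k), (i : ℕ) % 2 = 0 → Sum.inl i ∈ D) →
      Sum.inr () ∉ D →
      ((k : ℝ) - 1) * W ≤ ∑ v ∈ D, cycWeight k W v) :=
  ⟨hubSet_dominating, hubSet_connected, sum_hubSet_cycWeight_le W,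
    by linarith [Nat.cast_nonneg (α := ℝ) k],
    fun _ _ hconn heven hcD => sub_one_mul_le_sum_cycWeight hW hconn heven hcD⟩

open scoped Classical in
/-- In the cycle-plus-center example: the set of even-indexed (weight-1) nodes together with
the center `s` is a connected dominating set of weight at most `2k + n ≤ 2n` (`n = 2k+1`),
while any connected dominating set containing all even-indexed nodes but not the center must
contain at least `k−1` of the weight-`W` nodes, hence has weight at least `(k−1)·W`. -/
theorem stmt_13 (k : ℕ) (hk : 2 ≤ k) (W : ℝ) (hW : 1 ≤ W) :
    (∀ v, v ∉ ((Finset.univ.filter fun v : CycVertex k =>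
          (∃ i : Fin (2 * k), v = Sum.inl i ∧ (i : ℕ) % 2 = 0) ∨ v = Sum.inr ()) :
        Finset (CycVertex k)) →
      ∃ u ∈ (Finset.univ.filter fun v : CycVertex k =>
          (∃ i : Fin (2 * k), v = Sum.inl i ∧ (i : ℕ) % 2 = 0) ∨ v = Sum.inr ()),
        (cycGraph k).Adj v u) ∧
    ((cycGraph k).induce ((Finset.univ.filter fun v : CycVertex k =>
        (∃ i : Fin (2 * k), v = Sum.inl i ∧ (i : ℕ) % 2 = 0) ∨ v = Sum.inr ()) :
      Finset (CycVertex k))).Connected ∧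
    (∑ v ∈ (Finset.univ.filter fun v : CycVertex k =>
        (∃ i : Fin (2 * k), v = Sum.inl i ∧ (i : ℕ) % 2 = 0) ∨ v = Sum.inr ()),
      cycWeight k W v) ≤ 2 * k + (2 * k + 1) ∧
    ((2 * k + (2 * k + 1) : ℝ) ≤ 2 * (2 * k + 1)) ∧
    (∀ D : Finset (CycVertex k),
      (∀ v, v ∉ D → ∃ u ∈ D, (cycGraph k).Adj v u) →
      ((cycGraph k).induce (D : Set (CycVertex k))).Connected →
      (∀ i : Fin (2 * k), (i : ℕ) % 2 = 0 → Sum.inl i ∈ D) →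
      Sum.inr () ∉ D →
      ((k : ℝ) - 1) * W ≤ ∑ v ∈ D, cycWeight k W v) :=
  stmt_13_general k W hW
end

section
/- Replacing the overlay graph H_S (edges between dominating nodes within distance 3) by the sparser overlay H'_S — where each non-dominating node w with S-neighbors s₁,…,s_ℓ contributes the path edges (s₁,s₂),…,(s_{ℓ−1},s_ℓ), each pair of adjacent non-dominating nodes w, w' contributes edges (s^w₁, s^{w'}₁) and (s^w_ℓ, s^{w'}_{ℓ'}), and adjacent dominating nodes are joined directly — yields a connected graph on S, provided G is connected and S is a dominating set of G. -/
/-- The overlay relation `E'_S`: for each non-dominating node `w` with ordered list `L w` of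
its `S`-neighbors, consecutive entries of `L w` are joined; for adjacent non-dominating
`w, w'`, the heads of `L w, L w'` and the last elements of `L w, L w'` are joined; adjacent
dominating nodes are joined directly. -/
def overlayRel {V : Type*} (G : SimpleGraph V) (S : Set V) (L : V → List V)
    (a b : V) : Prop :=
  a ∈ S ∧ b ∈ S ∧
    (G.Adj a b ∨
      (∃ w, w ∉ S ∧ ∃ j : ℕ, (L w)[j]? = some a ∧ (L w)[j + 1]? = some b) ∨
      (∃ w w', w ∉ S ∧ w' ∉ S ∧ G.Adj w w' ∧
        (((L w).head? = some a ∧ (L w').head? = some b) ∨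
          ((L w).getLast? = some a ∧ (L w').getLast? = some b))))

/-!
Send every vertex `v` of `G` to a dominating vertex: `v` itself if `v ∈ S`, otherwise the head of
its ordered list `L v` of `S`-neighbours. Consecutive entries of `L w` are joined in `H'_S`, so all
of `L w` lies in one component; hence the images of two `G`-adjacent vertices are always joined in
`H'_S` (through the list of a non-dominating endpoint, or by the head–head edge when both endpoints
are non-dominating). Pushing a `G`-path between two dominating vertices forward therefore gives an
`H'_S`-path between them, and it stays inside `S` because `H'_S` has no edges leaving `S`.
-/

theorem List.IsChain.rel_of_mem {α : Type*} {r : α → α → Prop} (hr : Equivalence r)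
    {l : List α} (h : l.IsChain r) {a b : α} (ha : a ∈ l) (hb : b ∈ l) : r a b := by
  have : Trans r r r := ⟨hr.trans⟩
  have : Std.Symm r := ⟨fun _ _ => hr.symm⟩
  by_cases hab : a = b
  · exact hab ▸ hr.refl a
  · exact h.pairwise.forall ha hb hab

namespace SimpleGraph

variable {V W : Type*}

theorem fromRel_reachable_of_rel {r : V → V → Prop} {a b : V} (h : r a b) :
    (fromRel r).Reachable a b := by
  by_cases hab : a = b
  · exact hab ▸ Reachable.refl a
  · exact Adj.reachable ((fromRel_adj r a b).2 ⟨hab, Or.inl h⟩)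

theorem Reachable.map_of_adj {G : SimpleGraph V} {H : SimpleGraph W} (f : V → W)
    (hf : ∀ u v, G.Adj u v → H.Reachable (f u) (f v)) {u v : V} (h : G.Reachable u v) :
    H.Reachable (f u) (f v) := by
  obtain ⟨p⟩ := h
  induction p with
  | nil => exact Reachable.refl _
  | cons huv _ ih => exact (hf _ _ huv).trans ih

theorem Walk.support_subset_of_forall_adj_mem {G : SimpleGraph V} {s : Set V}
    (hs : ∀ a b, G.Adj a b → a ∈ s) {u v : V} (hu : u ∈ s) (p : G.Walk u v) :
    ∀ x ∈ p.support, x ∈ s := by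
  induction p with
  | nil => simpa using hu
  | cons huv _ ih =>
    simpa [hu] using ih (hs _ _ huv.symm)

theorem Reachable.induce_of_forall_adj_mem {G : SimpleGraph V} {s : Set V}
    (hs : ∀ a b, G.Adj a b → a ∈ s) {a b : V} (h : G.Reachable a b) (ha : a ∈ s) (hb : b ∈ s) :
    (G.induce s).Reachable ⟨a, ha⟩ ⟨b, hb⟩ :=
  let ⟨p⟩ := h
  ⟨p.induce s (p.support_subset_of_forall_adj_mem hs ha)⟩

end SimpleGraph

open SimpleGraph

section Overlay

variable {V : Type*} {G : SimpleGraph V} {S : Set V} {L : V → List V}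

theorem overlay_reachable_of_mem_neighborList {w : V} (hw : w ∉ S) (hLS : ∀ x ∈ L w, x ∈ S)
    {a b : V} (ha : a ∈ L w) (hb : b ∈ L w) :
    (fromRel (overlayRel G S L)).Reachable a b := by
  refine List.IsChain.rel_of_mem (reachable_is_equivalence _) ?_ ha hb
  refine List.isChain_iff_getElem.2 fun i hi => fromRel_reachable_of_rel ?_
  exact ⟨hLS _ (List.getElem_mem _), hLS _ (List.getElem_mem _),
    Or.inr (Or.inl ⟨w, hw, i, List.getElem?_eq_getElem _, List.getElem?_eq_getElem hi⟩)⟩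

variable (S L) in
open Classical in
noncomputable def overlayRep (v : V) : V :=
  if v ∈ S then v else (L v).head?.getD v

theorem overlayRep_of_mem {v : V} (hv : v ∈ S) : overlayRep S L v = v :=
  if_pos hv

theorem head?_eq_overlayRep {v : V} (hv : v ∉ S) (hL : L v ≠ []) :
    (L v).head? = some (overlayRep S L v) := by
  obtain ⟨x, l, hx⟩ := List.exists_cons_of_ne_nil hL
  simp [overlayRep, hv, hx]

variable (hL : ∀ w ∉ S, ∀ x, x ∈ L w ↔ x ∈ S ∧ G.Adj w x)
  (hdom : ∀ v ∉ S, ∃ u ∈ S, G.Adj v u)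
include hL hdom

theorem neighborList_ne_nil {w : V} (hw : w ∉ S) : L w ≠ [] := by
  obtain ⟨u, hu, hwu⟩ := hdom w hw
  exact List.ne_nil_of_mem ((hL w hw u).2 ⟨hu, hwu⟩)

theorem overlayRep_mem_neighborList {w : V} (hw : w ∉ S) : overlayRep S L w ∈ L w :=
  List.mem_of_mem_head? (head?_eq_overlayRep hw (neighborList_ne_nil hL hdom hw))

theorem overlay_reachable_overlayRep_of_adj_of_not_mem {u v : V} (huv : G.Adj u v) (hu : u ∉ S) :
    (fromRel (overlayRel G S L)).Reachable (overlayRep S L u) (overlayRep S L v) := by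
  have hLS : ∀ w ∉ S, ∀ x ∈ L w, x ∈ S := fun w hw x hx => ((hL w hw x).1 hx).1
  by_cases hv : v ∈ S
  · rw [overlayRep_of_mem hv]
    exact overlay_reachable_of_mem_neighborList hu (hLS u hu)
      (overlayRep_mem_neighborList hL hdom hu) ((hL u hu v).2 ⟨hv, huv⟩)
  · exact fromRel_reachable_of_rel
      ⟨hLS u hu _ (overlayRep_mem_neighborList hL hdom hu),
        hLS v hv _ (overlayRep_mem_neighborList hL hdom hv),
        Or.inr (Or.inr ⟨u, v, hu, hv, huv, Or.inl
          ⟨head?_eq_overlayRep hu (neighborList_ne_nil hL hdom hu),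
            head?_eq_overlayRep hv (neighborList_ne_nil hL hdom hv)⟩⟩)⟩

theorem overlay_reachable_overlayRep_of_adj {u v : V} (huv : G.Adj u v) :
    (fromRel (overlayRel G S L)).Reachable (overlayRep S L u) (overlayRep S L v) := by
  by_cases hu : u ∈ S
  · by_cases hv : v ∈ S
    · rw [overlayRep_of_mem hu, overlayRep_of_mem hv]
      exact fromRel_reachable_of_rel ⟨hu, hv, Or.inl huv⟩
    · exact (overlay_reachable_overlayRep_of_adj_of_not_mem hL hdom huv.symm hv).symm
  · exact overlay_reachable_overlayRep_of_adj_of_not_mem hL hdom huv hu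

end Overlay

theorem stmt_17_general {V : Type*} (G : SimpleGraph V)
    (hG : G.Connected) (S : Set V) (hS : S.Nonempty)
    (hdom : ∀ v, v ∉ S → ∃ u ∈ S, G.Adj v u)
    (L : V → List V)
    (hL : ∀ w, w ∉ S → ((∀ x, x ∈ L w ↔ x ∈ S ∧ G.Adj w x) ∧ (L w).Nodup)) :
    ((SimpleGraph.fromRel (overlayRel G S L)).induce S).Connected := by
  have : Nonempty S := hS.to_subtype
  refine ⟨fun a b => ?_⟩
  have hreach := (hG a b).map_of_adj (overlayRep S L)
    fun _ _ => overlay_reachable_overlayRep_of_adj (fun w hw => (hL w hw).1) hdom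
  rw [overlayRep_of_mem a.2, overlayRep_of_mem b.2] at hreach
  have hinS : ∀ a b, (fromRel (overlayRel G S L)).Adj a b → a ∈ S := by
    rintro a b ⟨-, h | h⟩
    exacts [h.1, h.2.1]
  exact hreach.induce_of_forall_adj_mem hinS a.2 b.2

/-- If `G` is connected and `S` is a dominating set of `G`, then the sparse overlay graph
`H'_S` on `S` is connected. -/
theorem stmt_17 {V : Type*} [Fintype V] [DecidableEq V] (G : SimpleGraph V)
    (hG : G.Connected) (S : Set V) (hS : S.Nonempty)
    (hdom : ∀ v, v ∉ S → ∃ u ∈ S, G.Adj v u)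
    (L : V → List V)
    (hL : ∀ w, w ∉ S → ((∀ x, x ∈ L w ↔ x ∈ S ∧ G.Adj w x) ∧ (L w).Nodup)) :
    ((SimpleGraph.fromRel (overlayRel G S L)).induce S).Connected :=
  stmt_17_general G hG S hS hdom L hL
end
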